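/- Let T be a commutative monad on Type u. The sequencing maps δ_X : List (T X) → T (List X), defined by δ_X [] = pure [] and δ_X (t :: l) = do {x ← t; xs ← δ_X l; pure (x :: xs)}, form a distributive law of the list monad (with pure x = [x] and join = List.flatten) over the monad T. -/
import Mathlib


universe u

/-- The canonical "double strength" `ψ` of a monad: first `p`, then `q`. -/
def monadPsi {T : Type u → Type u} [Monad T] {X Y : Type u} (p : T X) (q : T Y) :
    T (X × Y) := do
  let x ← p
  let y ← q
  pure (x, y)

/-- The reversed double strength `ψ'` of a monad: first `q`, then `p`. -/
def monadPsi' {T : Type u → Type u} [Monad T] {X Y : Type u} (p : T X) (q : T Y) :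
    T (X × Y) := do
  let y ← q
  let x ← p
  pure (x, y)

/-- `T` is commutative. -/
def MonadIsCommutative (T : Type u → Type u) [Monad T] : Prop :=
  ∀ (X Y : Type u) (p : T X) (q : T Y), monadPsi p q = monadPsi' p q

/-- `join` of a monad. -/
def monadJoin {T : Type u → Type u} [Monad T] {X : Type u} (p : T (T X)) : T X :=
  p >>= id

/-- List sequencing for a monad. -/
def seqList {T : Type u → Type u} [Monad T] {X : Type u} : List (T X) → T (List X)
  | [] => pure []
  | t :: l => do
    let x ← t
    let xs ← seqList l
    pure (x :: xs)


section Helpers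
variable {T : Type u → Type u} [Monad T] [LawfulMonad T]

theorem comm_bind (hcomm : MonadIsCommutative T) {X Y Z : Type u}
    (p : T X) (q : T Y) (f : X → Y → T Z) :
    (p >>= fun x => q >>= fun y => f x y) =
    (q >>= fun y => p >>= fun x => f x y) := by
  have h := hcomm X Y p q
  have h1 : monadPsi p q >>= (fun pr => f pr.1 pr.2) =
      monadPsi' p q >>= (fun pr => f pr.1 pr.2) := by rw [h]
  simpa [monadPsi, monadPsi', bind_assoc] using h1

theorem seqList_append {X : Type u} (a b : List (T X)) :
    seqList (a ++ b) = (seqList a >>= fun xs => seqList b >>= fun ys => pure (xs ++ ys)) := by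
  induction a with
  | nil => simp [seqList]
  | cons t l ih => simp [seqList, ih, bind_assoc]

end Helpers

/-- For a commutative monad `T`, the sequencing maps
`seqList : List (T X) → T (List X)` form a distributive law of the list monad
(with unit `x ↦ [x]` and multiplication `List.flatten`) over the monad `T`. -/
theorem seqList_isDistributiveLaw
    {T : Type u → Type u} [Monad T] [LawfulMonad T] (hcomm : MonadIsCommutative T) :
    -- naturality
    (∀ (X Y : Type u) (f : X → Y) (l : List (T X)),
      seqList (l.map (Functor.map f)) = List.map f <$> seqList l) ∧
    -- compatibility with the unit of S
    (∀ (X : Type u) (t : T X),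
      seqList [t] = (fun x : X => [x]) <$> t) ∧
    -- compatibility with the multiplication of S
    (∀ (X : Type u) (l : List (List (T X))),
      seqList l.flatten =
        (List.flatten : List (List X) → List X) <$> seqList (l.map seqList)) ∧
    -- compatibility with the unit of T
    (∀ (X : Type u) (l : List X),
      seqList (l.map (pure : X → T X)) = pure l) ∧
    -- compatibility with the multiplication of T
    (∀ (X : Type u) (l : List (T (T X))),
      seqList (l.map (monadJoin : T (T X) → T X)) =
        monadJoin (seqList <$> seqList l)) := by
  refine ⟨?_, ?_, ?_, ?_, ?_⟩
  · intro X Y f l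
    induction l with
    | nil => simp [seqList]
    | cons t l ih =>
      simp only [List.map_cons, seqList, ih, map_bind, bind_map_left, bind_assoc, pure_bind,
        map_pure, List.map_cons]
  · intro X t
    simp [seqList, ← bind_pure_comp]
  · intro X l
    induction l with
    | nil => simp [seqList]
    | cons a l ih =>
      simp [seqList, seqList_append, ih, bind_assoc, map_bind, bind_map_left]
  · intro X l
    induction l with
    | nil => simp [seqList]
    | cons x l ih => simp [seqList, ih]
  · intro X l
    induction l with
    | nil => simp [seqList, monadJoin]
    | cons t l ih =>
      simp only [List.map_cons, seqList, ih, monadJoin, map_bind, bind_assoc, pure_bind,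
        id_eq, bind_map_left]
      refine bind_congr fun u => ?_
      exact comm_bind hcomm u (seqList l) _
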